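/- arXiv:2405.11475 — 2 statements merged into one kernel-verified Lean document; each statement's English description precedes it below -/
import Mathlib

section
/- Let S be a string and i an index of S. Let A = S[a₁..b₁] and B = S[a₂..b₂] be two distinct highly periodic runs of S with ρ = per(A) and ρ' = per(B), such that a₁ ≤ i−ρ, i+ρ ≤ b₁, a₂ ≤ i−ρ', and i+ρ' ≤ b₂ (both runs are central at i). Then one of the intervals [a₁..b₁], [a₂..b₂] contains the other; moreover, if [a₂..b₂] properly contains [a₁..b₁], then ρ' > 2ρ. -/
variable {α : Type*}

/-- `sub S i j` is the substring `S[i..j]` (1-indexed, inclusive endpoints). -/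
def sub (S : List α) (i j : ℕ) : List α := (S.take j).drop (i - 1)

/-- `ρ` is a period of `T`: `1 ≤ ρ` and `T[i] = T[i+ρ]` for all valid `i`. -/
def IsPeriod (T : List α) (ρ : ℕ) : Prop :=
  1 ≤ ρ ∧ ∀ i : ℕ, i + ρ < T.length → T[i]? = T[i + ρ]?

/-- The minimal period of `T`. -/
noncomputable def per (T : List α) : ℕ := sInf {ρ : ℕ | IsPeriod T ρ}

/-- `S[ℓ..r]` is a `ρ`-periodic run of `S`. -/
def IsRun (S : List α) (ρ ℓ r : ℕ) : Prop :=
  1 ≤ ℓ ∧ ℓ ≤ r ∧ r ≤ S.length ∧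
  per (sub S ℓ r) = ρ ∧ 2 * ρ ≤ r - ℓ + 1 ∧
  ∀ ℓ' r' : ℕ, 1 ≤ ℓ' → ℓ' ≤ ℓ → r ≤ r' → r' ≤ S.length →
    per (sub S ℓ' r') = ρ → 2 * ρ ≤ r' - ℓ' + 1 → ℓ' = ℓ ∧ r' = r

/-- `p` is a period of the 1-indexed interval `[ℓ, r]` of `S`, phrased with
0-indexed `getElem?`. -/
def PerOn (S : List α) (ℓ r p : ℕ) : Prop :=
  ∀ x : ℕ, ℓ ≤ x + 1 → x + p + 1 ≤ r → S[x]? = S[x + p]?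

lemma sub_length (S : List α) {ℓ r : ℕ} (hr : r ≤ S.length) :
    (sub S ℓ r).length = r - (ℓ - 1) := by
  simp [sub]; omega

lemma sub_getElem? (S : List α) {ℓ r : ℕ} (k : ℕ) (hk : ℓ - 1 + k < r)
    (hr : r ≤ S.length) : (sub S ℓ r)[k]? = S[ℓ - 1 + k]? := by
  rw [sub, List.getElem?_drop, List.getElem?_take_of_lt hk]

lemma isPeriod_sub_iff {S : List α} {ℓ r p : ℕ} (h1 : 1 ≤ ℓ) (hlr : ℓ ≤ r)
    (hr : r ≤ S.length) : IsPeriod (sub S ℓ r) p ↔ (1 ≤ p ∧ PerOn S ℓ r p) := by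
  have hlen : (sub S ℓ r).length = r - (ℓ - 1) := sub_length S hr
  constructor
  · rintro ⟨hp1, hp⟩
    refine ⟨hp1, fun x hx hx2 => ?_⟩
    have h := hp (x - (ℓ - 1)) (by omega)
    rwa [sub_getElem? S _ (by omega) hr, sub_getElem? S _ (by omega) hr,
      show ℓ - 1 + (x - (ℓ - 1)) = x by omega,
      show ℓ - 1 + (x - (ℓ - 1) + p) = x + p by omega] at h
  · rintro ⟨hp1, hp⟩
    refine ⟨hp1, fun k hk => ?_⟩
    rw [hlen] at hk
    rw [sub_getElem? S _ (by omega) hr, sub_getElem? S _ (by omega) hr,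
      show ℓ - 1 + (k + p) = (ℓ - 1 + k) + p by omega]
    exact hp (ℓ - 1 + k) (by omega) (by omega)

lemma isPeriod_per {T : List α} (h : 1 ≤ T.length) : IsPeriod T (per T) :=
  Nat.sInf_mem (⟨T.length, ⟨h, fun i hi => absurd hi (by omega)⟩⟩ :
    Set.Nonempty {ρ : ℕ | IsPeriod T ρ})

lemma per_le {T : List α} {p : ℕ} (h : IsPeriod T p) : per T ≤ p :=
  Nat.sInf_le h

/-- Extract the `PerOn` form of the periodicity of a run, together with `1 ≤ ρ`. -/
lemma run_perOn {S : List α} {ρ ℓ r : ℕ} (h : IsRun S ρ ℓ r) :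
    1 ≤ ρ ∧ PerOn S ℓ r ρ := by
  obtain ⟨hℓ, hlr, hr, hper, _, _⟩ := h
  have hlen : 1 ≤ (sub S ℓ r).length := by rw [sub_length S hr]; omega
  have := isPeriod_per hlen
  rw [hper] at this
  exact (isPeriod_sub_iff hℓ hlr hr).1 this

/-- If the interval `[ℓ', r']` extending `[ℓ, r]` still has period `ρ`, then its
minimal period is still `ρ`. -/
lemma per_extend {S : List α} {ℓ r ℓ' r' ρ : ℕ} (h1 : 1 ≤ ℓ') (hl : ℓ' ≤ ℓ)
    (h1ℓ : 1 ≤ ℓ) (hlr : ℓ ≤ r) (hrr : r ≤ r') (hr' : r' ≤ S.length)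
    (hρ : 1 ≤ ρ) (hperon : PerOn S ℓ' r' ρ) (hbase : per (sub S ℓ r) = ρ) :
    per (sub S ℓ' r') = ρ := by
  have hle : per (sub S ℓ' r') ≤ ρ :=
    per_le ((isPeriod_sub_iff h1 (by omega) hr').2 ⟨hρ, hperon⟩)
  have hlen : 1 ≤ (sub S ℓ' r').length := by rw [sub_length S hr']; omega
  obtain ⟨hp1, hp⟩ := (isPeriod_sub_iff h1 (by omega) hr').1 (isPeriod_per hlen)
  have hres : PerOn S ℓ r (per (sub S ℓ' r')) :=
    fun x hx hx2 => hp x (by omega) (by omega)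
  have hge : ρ ≤ per (sub S ℓ' r') := by
    rw [← hbase]
    exact per_le ((isPeriod_sub_iff h1ℓ hlr (by omega)).2 ⟨hp1, hres⟩)
  omega

/-- Key containment lemma: if two runs are central at `i` and `ρ ≤ ρ'`, then the
second run contains the first. -/
lemma contain {S : List α} {i a₁ b₁ a₂ b₂ ρ ρ' : ℕ}
    (h1 : IsRun S ρ a₁ b₁) (h2 : IsRun S ρ' a₂ b₂)
    (hc1l : a₁ + ρ ≤ i) (hc1r : i + ρ ≤ b₁)
    (hc2l : a₂ + ρ' ≤ i) (hc2r : i + ρ' ≤ b₂)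
    (hle : ρ ≤ ρ') : a₂ ≤ a₁ ∧ b₁ ≤ b₂ := by
  obtain ⟨hρ1, P1⟩ := run_perOn h1
  obtain ⟨hρ'1, P2⟩ := run_perOn h2
  obtain ⟨ha₁, hab₁, hb₁S, hper₁, hlen₁, hmax₁⟩ := h1
  obtain ⟨ha₂, hab₂, hb₂S, hper₂, hlen₂, hmax₂⟩ := h2
  constructor
  · by_contra hcon
    push_neg at hcon
    -- a₁ < a₂ ; extend run 2 one step to the left
    have hext : PerOn S (a₂ - 1) b₂ ρ' := by
      intro x hx hx2
      by_cases hcase : a₂ ≤ x + 1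
      · exact P2 x hcase hx2
      · -- x + 1 = a₂ - 1
        have hx' : x + 2 = a₂ := by omega
        have e1 : S[x]? = S[x + ρ]? := P1 x (by omega) (by omega)
        have e2 : S[x + ρ]? = S[x + ρ + ρ']? := P2 (x + ρ) (by omega) (by omega)
        have e3 : S[x + ρ']? = S[x + ρ' + ρ]? := P1 (x + ρ') (by omega) (by omega)
        rw [show x + ρ' + ρ = x + ρ + ρ' by ring] at e3
        exact (e1.trans e2).trans e3.symm
    have hper' : per (sub S (a₂ - 1) b₂) = ρ' :=
      per_extend (by omega) (by omega) ha₂ hab₂ le_rfl hb₂S hρ'1 hext hper₂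
    have := (hmax₂ (a₂ - 1) b₂ (by omega) (by omega) le_rfl hb₂S hper' (by omega)).1
    omega
  · by_contra hcon
    push_neg at hcon
    -- b₂ < b₁ ; extend run 2 one step to the right
    have hext : PerOn S a₂ (b₂ + 1) ρ' := by
      intro x hx hx2
      by_cases hcase : x + ρ' + 1 ≤ b₂
      · exact P2 x hx hcase
      · -- x + ρ' = b₂
        have hx' : x + ρ' = b₂ := by omega
        obtain ⟨y, hy⟩ : ∃ y, x = y + ρ := ⟨x - ρ, by omega⟩
        subst hy
        -- positions: y + ρ = x, target S[x]? = S[x + ρ']?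
        have e1 : S[y]? = S[y + ρ]? := P1 y (by omega) (by omega)
        have e2 : S[y]? = S[y + ρ']? := P2 y (by omega) (by omega)
        have e3 : S[y + ρ']? = S[y + ρ' + ρ]? := P1 (y + ρ') (by omega) (by omega)
        rw [show y + ρ' + ρ = y + ρ + ρ' by ring] at e3
        exact e1.symm.trans (e2.trans e3)
    have hper' : per (sub S a₂ (b₂ + 1)) = ρ' :=
      per_extend ha₂ le_rfl ha₂ hab₂ (by omega) (by omega) hρ'1 hext hper₂
    have := (hmax₂ a₂ (b₂ + 1) ha₂ le_rfl (by omega) (by omega) hper' (by omega)).2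
    omega

/-- Period subtraction on a long enough interval. -/
lemma per_sub {S : List α} {a b ρ d : ℕ} (h1a : 1 ≤ a)
    (P1 : PerOn S a b ρ) (P2 : PerOn S a b (ρ + d))
    (hlen : a + 3 * ρ ≤ b + 1) (hd : d ≤ ρ) : PerOn S a b d := by
  intro x hx hx2
  by_cases hcase : x + ρ + d + 1 ≤ b
  · have e1 := P2 x hx (by omega)
    have e2 := P1 (x + d) (by omega) (by omega)
    rw [show x + d + ρ = x + (ρ + d) by ring] at e2
    exact e1.trans e2.symm
  · obtain ⟨y, hy⟩ : ∃ y, x = y + ρ := ⟨x - ρ, by omega⟩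
    subst hy
    have e1 := P1 y (by omega) (by omega)
    have e2 := P2 y (by omega) (by omega)
    rw [show y + (ρ + d) = y + ρ + d by ring] at e2
    exact e1.symm.trans e2

/-- Transport the short period `ρ` from `[a₁,b₁]` to all of `[a₂,b₂]` using the
period `2ρ` of `[a₂,b₂]`. -/
lemma per_transport {S : List α} {a₁ b₁ a₂ b₂ ρ : ℕ} (hρ : 1 ≤ ρ) (h1a : 1 ≤ a₁)
    (P1 : PerOn S a₁ b₁ ρ) (P2 : PerOn S a₂ b₂ (2 * ρ))
    (hlen : a₁ + 3 * ρ ≤ b₁ + 1) (ha : a₂ ≤ a₁) (hb : b₁ ≤ b₂) :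
    PerOn S a₂ b₂ ρ := by
  suffices H : ∀ n x, (a₁ - (x + 1)) + ((x + ρ + 1) - b₁) ≤ n →
      a₂ ≤ x + 1 → x + ρ + 1 ≤ b₂ → S[x]? = S[x + ρ]? by
    intro x hx hx2
    exact H _ x le_rfl hx hx2
  intro n
  induction n with
  | zero =>
    intro x hμ hx hx2
    exact P1 x (by omega) (by omega)
  | succ n ih =>
    intro x hμ hx hx2
    by_cases hup : a₁ ≤ x + 1
    · by_cases hdir : x + ρ + 1 ≤ b₁
      · exact P1 x hup hdir
      · -- step down
        obtain ⟨y, hy⟩ : ∃ y, x = y + 2 * ρ := ⟨x - 2 * ρ, by omega⟩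
        subst hy
        have e1 : S[y]? = S[y + 2 * ρ]? := P2 y (by omega) (by omega)
        have e2 : S[y + ρ]? = S[y + ρ + 2 * ρ]? := P2 (y + ρ) (by omega) (by omega)
        rw [show y + ρ + 2 * ρ = y + 2 * ρ + ρ by ring] at e2
        have e3 : S[y]? = S[y + ρ]? := ih y (by omega) (by omega) (by omega)
        exact (e1.symm.trans e3).trans e2
    · -- step up
      have e1 : S[x]? = S[x + 2 * ρ]? := P2 x hx (by omega)
      have e2 : S[x + ρ]? = S[x + ρ + 2 * ρ]? := P2 (x + ρ) (by omega) (by omega)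
      have e3 : S[x + 2 * ρ]? = S[x + 2 * ρ + ρ]? := ih (x + 2 * ρ) (by omega) (by omega) (by omega)
      rw [show x + 2 * ρ + ρ = x + ρ + 2 * ρ by ring] at e3
      exact (e1.trans e3).trans e2.symm

/-- Two distinct highly periodic runs `S[a₁..b₁]` (period `ρ`) and `S[a₂..b₂]`
(period `ρ'`) that are both central at `i` (i.e. `a ≤ i−ρ` and `i+ρ ≤ b`) are
nested; moreover if `[a₂..b₂]` properly contains `[a₁..b₁]` then `ρ' > 2ρ`. -/
theorem stmt5 (S : List α) (i a₁ b₁ a₂ b₂ ρ ρ' : ℕ)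
    (h1 : IsRun S ρ a₁ b₁) (h2 : IsRun S ρ' a₂ b₂)
    (hhp1 : 3 * ρ ≤ b₁ - a₁ + 1) (hhp2 : 3 * ρ' ≤ b₂ - a₂ + 1)
    (hne : (a₁, b₁) ≠ (a₂, b₂))
    (hc1l : a₁ + ρ ≤ i) (hc1r : i + ρ ≤ b₁)
    (hc2l : a₂ + ρ' ≤ i) (hc2r : i + ρ' ≤ b₂) :
    ((a₁ ≤ a₂ ∧ b₂ ≤ b₁) ∨ (a₂ ≤ a₁ ∧ b₁ ≤ b₂)) ∧
    (a₂ ≤ a₁ → b₁ ≤ b₂ → (a₂ < a₁ ∨ b₁ < b₂) → 2 * ρ < ρ') := by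
  obtain ⟨hρ1, P1⟩ := run_perOn h1
  obtain ⟨hρ'1, P2⟩ := run_perOn h2
  have key2 : a₂ ≤ a₁ → b₁ ≤ b₂ → (a₂ < a₁ ∨ b₁ < b₂) → 2 * ρ < ρ' := by
    intro h2a h1b hproper
    have hρρ' : ρ < ρ' := by
      by_contra hcon
      push_neg at hcon
      have := contain h2 h1 hc2l hc2r hc1l hc1r hcon
      omega
    obtain ⟨ha₁, hab₁, hb₁S, hper₁, hlen₁, hmax₁⟩ := h1
    obtain ⟨ha₂, hab₂, hb₂S, hper₂, hlen₂, hmax₂⟩ := h2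
    by_contra hcon
    push_neg at hcon
    -- ρ < ρ' ≤ 2ρ; interval [a₁,b₁] has periods ρ and ρ', hence ρ' - ρ
    obtain ⟨d, hd⟩ : ∃ d, ρ' = ρ + d := ⟨ρ' - ρ, by omega⟩
    have P2res : PerOn S a₁ b₁ (ρ + d) := by
      rw [← hd]
      exact fun x hx hx2 => P2 x (by omega) (by omega)
    have Pd : PerOn S a₁ b₁ d :=
      per_sub ha₁ P1 P2res (by omega) (by omega)
    have hρd : ρ ≤ d := by
      have := per_le ((isPeriod_sub_iff ha₁ hab₁ hb₁S).2 ⟨by omega, Pd⟩)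
      omega
    -- hence ρ' = 2ρ
    have hρ'2 : ρ' = 2 * ρ := by omega
    -- transport period ρ to [a₂,b₂]
    rw [hρ'2] at P2
    have Pρ : PerOn S a₂ b₂ ρ :=
      per_transport hρ1 ha₁ P1 P2 (by omega) h2a h1b
    have := per_le ((isPeriod_sub_iff ha₂ hab₂ hb₂S).2 ⟨hρ1, Pρ⟩)
    omega
  refine ⟨?_, key2⟩
  rcases le_total ρ ρ' with h | h
  · exact Or.inr (contain h1 h2 hc1l hc1r hc2l hc2r h)
  · exact Or.inl (contain h2 h1 hc2l hc2r hc1l hc1r h)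
end

section
/- Let v be a string of length ρ ≥ 1, let W = v^{[D_ℓ;Q;D_r]} with D_ℓ, D_r ∈ [0..ρ−1], Q ≥ 2, and per(W) = ρ, let u = v^{[d_ℓ;q;d_r]} with d_ℓ, d_r ∈ [0..ρ−1], q ≥ 1, and |u| ≥ 3ρ, and let j ∈ [1..|W|]. Then u covers position j of W (i.e., some occurrence of u in W contains position j) if and only if one of the following four mutually exclusive conditions holds: (1) d_ℓ ≤ D_ℓ, d_r ≤ D_r, q ≤ Q, and D_ℓ−d_ℓ+1 ≤ j ≤ D_ℓ+Qρ+d_r; (2) d_ℓ > D_ℓ, d_r ≤ D_r, q ≤ Q−1, and D_ℓ−d_ℓ+1+ρ ≤ j ≤ D_ℓ+Qρ+d_r; (3) d_ℓ ≤ D_ℓ, d_r > D_r, q ≤ Q−1, and D_ℓ−d_ℓ+1 ≤ j ≤ D_ℓ+(Q−1)ρ+d_r; (4) d_ℓ > D_ℓ, d_r > D_r, q ≤ Q−2, and D_ℓ−d_ℓ+1+ρ ≤ j ≤ D_ℓ+(Q−1)ρ+d_r. -/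
variable {α : Type*}

/-- `X` occurs in `W` at (1-indexed) position `p`, i.e. `W[p..p+|X|−1] = X`. -/
def OccursAt (X W : List α) (p : ℕ) : Prop :=
  1 ≤ p ∧ p + X.length - 1 ≤ W.length ∧ sub W p (p + X.length - 1) = X

/-- `v^{[d₁;q;d₂]}`: the suffix of `v` of length `d₁`, followed by `q` copies
of `v`, followed by the prefix of `v` of length `d₂`. -/
def rep (v : List α) (d₁ q d₂ : ℕ) : List α :=
  v.drop (v.length - d₁) ++ (List.replicate q v).flatten ++ v.take d₂


lemma flat_rep_get (v : List α) (Q m : ℕ) (hm : m < Q * v.length) :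
    (List.replicate Q v).flatten[m]? = v[m % v.length]? := by
  induction Q generalizing m with
  | zero => simp at hm
  | succ Q ih =>
    rw [Nat.succ_mul] at hm
    rw [List.replicate_succ, List.flatten_cons]
    rcases lt_or_ge m v.length with h | h
    · rw [List.getElem?_append_left h, Nat.mod_eq_of_lt h]
    · rw [List.getElem?_append_right h, ih _ (by omega)]
      have hmm : m % v.length = (m - v.length) % v.length := by
        conv_lhs => rw [← Nat.sub_add_cancel h]
        rw [Nat.add_mod_right]
      rw [hmm]

lemma rep_length (v : List α) (d1 Q d2 : ℕ) (hd1 : d1 ≤ v.length)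
    (hd2 : d2 ≤ v.length) : (rep v d1 Q d2).length = d1 + Q * v.length + d2 := by
  simp [rep, List.length_flatten, List.map_replicate]
  omega

lemma rep_get (v : List α) (hv : 0 < v.length) (d1 Q d2 : ℕ) (hd1 : d1 ≤ v.length)
    (hd2 : d2 ≤ v.length) (i : ℕ) (hi : i < d1 + Q * v.length + d2) :
    (rep v d1 Q d2)[i]? = v[(i + v.length - d1) % v.length]? := by
  rw [rep, List.append_assoc]
  rcases lt_or_ge i d1 with h | h
  · rw [List.getElem?_append_left (by simp; omega), List.getElem?_drop]
    congr 1
    rw [Nat.mod_eq_of_lt (by omega)]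
    omega
  · rw [List.getElem?_append_right (by simp; omega)]
    have hlen : (v.drop (v.length - d1)).length = d1 := by simp; omega
    rw [hlen]
    rcases lt_or_ge (i - d1) (Q * v.length) with h2 | h2
    · rw [List.getElem?_append_left (by simp [List.length_flatten, List.map_replicate]; omega),
        flat_rep_get v Q _ h2]
      congr 1
      conv_rhs => rw [show i + v.length - d1 = (i - d1) + v.length by omega, Nat.add_mod_right]
    · rw [List.getElem?_append_right (by simp [List.length_flatten, List.map_replicate]; omega)]
      have hfl : (List.replicate Q v).flatten.length = Q * v.length := by
        simp [List.length_flatten, List.map_replicate]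
      rw [hfl, List.getElem?_take_of_lt (by omega)]
      congr 1
      have he : i + v.length - d1 = (i - d1 - Q * v.length) + (Q + 1) * v.length := by
        rw [add_mul, one_mul]; omega
      rw [he, Nat.add_mul_mod_self_right, Nat.mod_eq_of_lt (by omega)]

lemma occ_pointwise (u W : List α) (p : ℕ) (hL : 1 ≤ u.length) :
    OccursAt u W p ↔ 1 ≤ p ∧ p + u.length - 1 ≤ W.length ∧
      ∀ k < u.length, W[p - 1 + k]? = u[k]? := by
  constructor
  · rintro ⟨h1, h2, h3⟩
    refine ⟨h1, h2, fun k hk => ?_⟩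
    conv_rhs => rw [← h3]
    rw [sub, List.getElem?_drop, List.getElem?_take_of_lt (by omega)]
  · rintro ⟨h1, h2, h3⟩
    refine ⟨h1, h2, ?_⟩
    apply List.ext_getElem?
    intro n
    rw [sub, List.getElem?_drop]
    rcases lt_or_ge n u.length with hn | hn
    · rw [List.getElem?_take_of_lt (by omega), h3 n hn]
    · rw [List.getElem?_eq_none (l := u) (by omega),
        List.getElem?_eq_none (by simp [List.length_take]; omega)]

lemma rot_lemma (v : List α) (ρ : ℕ) (hρ : 1 ≤ ρ) (c1 c2 : ℕ)
    (H : ∀ k < ρ, v[(k + c1) % ρ]? = v[(k + c2) % ρ]?)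
    (hne : ¬ c1 % ρ = c2 % ρ) :
    ∃ s, 1 ≤ s ∧ s < ρ ∧ ∀ m : ℕ, v[(m + s) % ρ]? = v[m % ρ]? := by
  have H' : ∀ k : ℕ, v[(k + c1) % ρ]? = v[(k + c2) % ρ]? := by
    intro k
    have h := H (k % ρ) (Nat.mod_lt _ (by omega))
    rwa [Nat.mod_add_mod, Nat.mod_add_mod] at h
  set s := (ρ - c2 % ρ + c1) % ρ with hs
  have hslt : s < ρ := Nat.mod_lt _ (by omega)
  have HD : ∀ m : ℕ, v[(m + s) % ρ]? = v[m % ρ]? := by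
    intro m
    have h := H' (m + (ρ - c2 % ρ))
    have e1 : (m + (ρ - c2 % ρ) + c1) % ρ = (m + s) % ρ := by
      rw [hs, Nat.add_mod_mod, Nat.add_assoc]
    have e2 : (m + (ρ - c2 % ρ) + c2) % ρ = m % ρ := by
      have hd := Nat.div_add_mod c2 ρ
      have hlt : c2 % ρ < ρ := Nat.mod_lt _ (by omega)
      have e : m + (ρ - c2 % ρ) + c2 = m + ρ * (1 + c2 / ρ) := by
        rw [Nat.mul_add, Nat.mul_one]; omega
      rw [e, Nat.add_mul_mod_self_left]
    rwa [e1, e2] at h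
  refine ⟨s, ?_, hslt, HD⟩
  rcases Nat.eq_zero_or_pos s with h0 | h0
  · exfalso
    apply hne
    have hdvd : ρ ∣ (ρ - c2 % ρ + c1) := Nat.dvd_iff_mod_eq_zero.mpr (hs ▸ h0)
    obtain ⟨w, hw⟩ := hdvd
    have hlt : c2 % ρ < ρ := Nat.mod_lt _ (by omega)
    rcases w with _ | w
    · simp at hw; omega
    · have hc1 : c1 = ρ * w + c2 % ρ := by rw [Nat.mul_succ] at hw; omega
      rw [hc1, Nat.mul_add_mod, Nat.mod_mod_of_dvd _ dvd_rfl]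
  · exact h0

lemma occ_iff (v : List α) (ρ : ℕ) (hv : v.length = ρ) (hρ : 1 ≤ ρ)
    (Dl Dr dl dr Q q : ℕ) (hDl : Dl < ρ) (hDr : Dr < ρ) (hdl : dl < ρ) (hdr : dr < ρ)
    (W u : List α) (hW : W = rep v Dl Q Dr) (hu : u = rep v dl q dr)
    (hperW : per W = ρ) (hulen : 3 * ρ ≤ u.length) (p : ℕ) :
    OccursAt u W p ↔ 1 ≤ p ∧ p + (dl + q * ρ + dr) ≤ (Dl + Q * ρ + Dr) + 1 ∧
      (p + dl) % ρ = (Dl + 1) % ρ := by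
  have hvpos : 0 < v.length := by omega
  have hWlen : W.length = Dl + Q * ρ + Dr := by
    rw [hW, rep_length v Dl Q Dr (by omega) (by omega), hv]
  have hulen' : u.length = dl + q * ρ + dr := by
    rw [hu, rep_length v dl q dr (by omega) (by omega), hv]
  have Wget : ∀ i < Dl + Q * ρ + Dr, W[i]? = v[(i + ρ - Dl) % ρ]? := by
    intro i hi
    rw [hW, rep_get v hvpos Dl Q Dr (by omega) (by omega) i (by rw [hv]; omega), hv]
  have uget : ∀ k < dl + q * ρ + dr, u[k]? = v[(k + ρ - dl) % ρ]? := by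
    intro k hk
    rw [hu, rep_get v hvpos dl q dr (by omega) (by omega) k (by rw [hv]; omega), hv]
  rw [occ_pointwise u W p (by omega)]
  constructor
  · rintro ⟨h1, h2, h3⟩
    refine ⟨h1, by omega, ?_⟩
    have H : ∀ k < ρ, v[(k + (p - 1 + (ρ - Dl))) % ρ]? = v[(k + (ρ - dl)) % ρ]? := by
      intro k hk
      have h := h3 k (by omega)
      rw [Wget _ (by omega), uget _ (by omega)] at h
      have e1 : p - 1 + k + ρ - Dl = k + (p - 1 + (ρ - Dl)) := by omega
      have e2 : k + ρ - dl = k + (ρ - dl) := by omega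
      rw [e1, e2] at h
      exact h
    by_cases hc : (p - 1 + (ρ - Dl)) % ρ = (ρ - dl) % ρ
    · have hmc : Nat.ModEq ρ (p - 1 + (ρ - Dl)) (ρ - dl) := hc
      have h2' := hmc.add_right (Dl + dl)
      have e1 : p - 1 + (ρ - Dl) + (Dl + dl) = (p + dl) + (ρ - 1) := by omega
      have e2 : (ρ - dl) + (Dl + dl) = (Dl + 1) + (ρ - 1) := by omega
      rw [e1, e2] at h2'
      exact Nat.ModEq.add_right_cancel' _ h2'
    · exfalso
      obtain ⟨s, hs1, hs2, HD⟩ := rot_lemma v ρ hρ _ _ H hc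
      have hper : IsPeriod W s := by
        refine ⟨hs1, fun i hi => ?_⟩
        rw [hWlen] at hi
        rw [Wget i (by omega), Wget (i + s) (by omega)]
        have e : i + s + ρ - Dl = (i + ρ - Dl) + s := by omega
        rw [e]
        exact (HD (i + ρ - Dl)).symm
      have hle : per W ≤ s := Nat.sInf_le hper
      omega
  · rintro ⟨h1, h2, hmod⟩
    refine ⟨h1, by omega, ?_⟩
    intro k hk
    rw [Wget _ (by omega), uget _ (by omega)]
    congr 1
    have hmc : Nat.ModEq ρ (p + dl) (Dl + 1) := hmod
    have h2' := hmc.add_right (k + ρ - 1)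
    have e1 : (p + dl) + (k + ρ - 1) = (p - 1 + k + ρ - Dl) + (Dl + dl) := by omega
    have e2 : (Dl + 1) + (k + ρ - 1) = (k + ρ - dl) + (Dl + dl) := by omega
    rw [e1, e2] at h2'
    exact Nat.ModEq.add_right_cancel' _ h2'


lemma mul_le_of' (a b ρ : ℕ) (h : a * ρ < b * ρ + ρ) : a ≤ b := by
  have h2 : a * ρ < (b + 1) * ρ := by rw [add_mul, one_mul]; omega
  have := lt_of_mul_lt_mul_right h2 (Nat.zero_le ρ)
  omega

lemma cover_exists (ρ L pmin tmax M j dl Dl : ℕ) (hρ : 1 ≤ ρ) (hL : ρ ≤ L)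
    (hp1 : 1 ≤ pmin) (hja : pmin ≤ j) (hjb : j ≤ pmin + tmax * ρ + L - 1)
    (hM : pmin + tmax * ρ + L ≤ M + 1)
    (hmod : ∀ t' : ℕ, (pmin + t' * ρ + dl) % ρ = (Dl + 1) % ρ) :
    ∃ p, (1 ≤ p ∧ p + L ≤ M + 1 ∧ (p + dl) % ρ = (Dl + 1) % ρ) ∧
      p ≤ j ∧ j ≤ p + L - 1 := by
  obtain ⟨k, r, hkr, hrlt⟩ : ∃ k r, ρ * k + r = j - pmin ∧ r < ρ :=
    ⟨(j - pmin) / ρ, (j - pmin) % ρ, Nat.div_add_mod _ _, Nat.mod_lt _ (by omega)⟩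
  set t' := min k tmax with ht'
  have hm2 : t' * ρ ≤ tmax * ρ := Nat.mul_le_mul_right ρ (min_le_right k tmax)
  have hm1 : t' * ρ ≤ k * ρ := Nat.mul_le_mul_right ρ (min_le_left k tmax)
  have hkc : k * ρ = ρ * k := Nat.mul_comm _ _
  refine ⟨pmin + t' * ρ, ⟨by omega, by omega, hmod t'⟩, by omega, ?_⟩
  rcases le_total k tmax with h | h
  · have he : t' = k := min_eq_left h
    have : t' * ρ = k * ρ := by rw [he]
    omega
  · have he : t' = tmax := min_eq_right h
    have : t' * ρ = tmax * ρ := by rw [he]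
    omega

lemma arith_iff (ρ Dl Dr dl dr Q q j : ℕ) (hρ : 1 ≤ ρ)
    (hDl : Dl < ρ) (hDr : Dr < ρ) (hdl : dl < ρ) (hdr : dr < ρ)
    (hQ : 2 ≤ Q) (hq : 1 ≤ q) (hL3 : 3 * ρ ≤ dl + q * ρ + dr)
    (hj1 : 1 ≤ j) (hjW : j ≤ Dl + Q * ρ + Dr) :
    (∃ p, (1 ≤ p ∧ p + (dl + q * ρ + dr) ≤ Dl + Q * ρ + Dr + 1 ∧
        (p + dl) % ρ = (Dl + 1) % ρ) ∧ p ≤ j ∧ j ≤ p + (dl + q * ρ + dr) - 1) ↔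
      ((dl ≤ Dl ∧ dr ≤ Dr ∧ q ≤ Q ∧
          Dl - dl + 1 ≤ j ∧ j ≤ Dl + Q * ρ + dr) ∨
       (Dl < dl ∧ dr ≤ Dr ∧ q ≤ Q - 1 ∧
          Dl + 1 + ρ - dl ≤ j ∧ j ≤ Dl + Q * ρ + dr) ∨
       (dl ≤ Dl ∧ Dr < dr ∧ q ≤ Q - 1 ∧
          Dl - dl + 1 ≤ j ∧ j ≤ Dl + (Q - 1) * ρ + dr) ∨
       (Dl < dl ∧ Dr < dr ∧ q ≤ Q - 2 ∧
          Dl + 1 + ρ - dl ≤ j ∧ j ≤ Dl + (Q - 1) * ρ + dr)) := by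
  have hQ1 : (Q - 1) * ρ = Q * ρ - 1 * ρ := Nat.sub_mul Q 1 ρ
  have hone : 1 * ρ = ρ := one_mul ρ
  have hQρ : 2 * ρ ≤ Q * ρ := Nat.mul_le_mul_right ρ hQ
  have hqρ : 1 * ρ ≤ q * ρ := Nat.mul_le_mul_right ρ hq
  constructor
  · rintro ⟨p, ⟨hp1, hpM, hmod⟩, hpj, hjp⟩
    have hmc : Nat.ModEq ρ (p + dl) (Dl + 1) := hmod
    have hsh : Nat.ModEq ρ (p + dl) (p + dl + ρ) := (Nat.add_mod_right (p + dl) ρ).symm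
    have h' : Nat.ModEq ρ (Dl + 1) (p + dl + ρ) := hmc.symm.trans hsh
    obtain ⟨t, ht⟩ := (Nat.modEq_iff_dvd' (by omega)).mp h'
    rcases t with _ | t0
    · rw [Nat.mul_zero] at ht; omega
    · have hA : p + dl = Dl + 1 + ρ * t0 := by rw [Nat.mul_succ] at ht; omega
      have hAc : ρ * t0 = t0 * ρ := Nat.mul_comm _ _
      have hbound : t0 * ρ + q * ρ + dr ≤ Q * ρ + Dr := by omega
      have htq : (t0 + q) * ρ = t0 * ρ + q * ρ := add_mul _ _ _
      by_cases hcl : dl ≤ Dl <;> by_cases hcr : dr ≤ Dr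
      · -- case 1
        have h5 : (t0 + q) * ρ < Q * ρ + ρ := by omega
        have h6 : t0 + q ≤ Q := mul_le_of' _ _ _ h5
        have h7 : (t0 + q) * ρ ≤ Q * ρ := Nat.mul_le_mul_right ρ h6
        exact Or.inl ⟨hcl, hcr, by omega, by omega, by omega⟩
      · -- case 3 : dl ≤ Dl, Dr < dr
        push_neg at hcr
        have h5 : (t0 + q) * ρ < Q * ρ := by omega
        have h6 : t0 + q < Q := lt_of_mul_lt_mul_right h5 (Nat.zero_le ρ)
        have h7 : (t0 + q) * ρ ≤ (Q - 1) * ρ := Nat.mul_le_mul_right ρ (by omega)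
        exact Or.inr (Or.inr (Or.inl ⟨hcl, hcr, by omega, by omega, by omega⟩))
      · -- case 2 : Dl < dl, dr ≤ Dr
        push_neg at hcl
        have ht0 : 1 ≤ t0 := by
          rcases Nat.eq_zero_or_pos t0 with h | h
          · rw [h, Nat.mul_zero] at hA; omega
          · exact h
        have htρ : ρ ≤ t0 * ρ := Nat.le_mul_of_pos_left ρ ht0
        have h5 : (t0 + q) * ρ < Q * ρ + ρ := by omega
        have h6 : t0 + q ≤ Q := mul_le_of' _ _ _ h5
        have h7 : (t0 + q) * ρ ≤ Q * ρ := Nat.mul_le_mul_right ρ h6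
        exact Or.inr (Or.inl ⟨hcl, hcr, by omega, by omega, by omega⟩)
      · -- case 4
        push_neg at hcl; push_neg at hcr
        have ht0 : 1 ≤ t0 := by
          rcases Nat.eq_zero_or_pos t0 with h | h
          · rw [h, Nat.mul_zero] at hA; omega
          · exact h
        have htρ : ρ ≤ t0 * ρ := Nat.le_mul_of_pos_left ρ ht0
        have h5 : (t0 + q) * ρ < Q * ρ := by omega
        have h6 : t0 + q < Q := lt_of_mul_lt_mul_right h5 (Nat.zero_le ρ)
        have h7 : (t0 + q) * ρ ≤ (Q - 1) * ρ := Nat.mul_le_mul_right ρ (by omega)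
        exact Or.inr (Or.inr (Or.inr ⟨hcl, hcr, by omega, by omega, by omega⟩))
  · rintro (⟨h1, h2, h3, h4, h5⟩ | ⟨h1, h2, h3, h4, h5⟩ | ⟨h1, h2, h3, h4, h5⟩ |
      ⟨h1, h2, h3, h4, h5⟩)
    · -- case 1: pmin = Dl - dl + 1, tmax = Q - q
      have hsub : (Q - q) * ρ = Q * ρ - q * ρ := Nat.sub_mul _ _ _
      have hmot : q * ρ ≤ Q * ρ := Nat.mul_le_mul_right ρ h3
      refine cover_exists ρ _ (Dl - dl + 1) (Q - q) _ j dl Dl hρ (by omega)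
        (by omega) (by omega) (by omega) (by omega) ?_
      intro t'
      have e : Dl - dl + 1 + t' * ρ + dl = Dl + 1 + t' * ρ := by omega
      rw [e, Nat.add_mul_mod_self_right]
    · -- case 2: pmin = Dl + 1 + ρ - dl, tmax = Q - 1 - q
      have hsub : (Q - 1 - q) * ρ = Q * ρ - 1 * ρ - q * ρ := by
        rw [Nat.sub_mul, Nat.sub_mul]
      have hmot : q * ρ + 1 * ρ ≤ Q * ρ := by
        have := Nat.mul_le_mul_right ρ (show q + 1 ≤ Q by omega)
        rw [add_mul] at this
        omega
      refine cover_exists ρ _ (Dl + 1 + ρ - dl) (Q - 1 - q) _ j dl Dl hρ (by omega)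
        (by omega) (by omega) (by omega) (by omega) ?_
      intro t'
      have e : Dl + 1 + ρ - dl + t' * ρ + dl = Dl + 1 + (t' + 1) * ρ := by
        rw [add_mul, one_mul]; omega
      rw [e, Nat.add_mul_mod_self_right]
    · -- case 3: pmin = Dl - dl + 1, tmax = Q - 1 - q
      have hsub : (Q - 1 - q) * ρ = Q * ρ - 1 * ρ - q * ρ := by
        rw [Nat.sub_mul, Nat.sub_mul]
      have hmot : q * ρ + 1 * ρ ≤ Q * ρ := by
        have := Nat.mul_le_mul_right ρ (show q + 1 ≤ Q by omega)
        rw [add_mul] at this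
        omega
      refine cover_exists ρ _ (Dl - dl + 1) (Q - 1 - q) _ j dl Dl hρ (by omega)
        (by omega) (by omega) (by omega) (by omega) ?_
      intro t'
      have e : Dl - dl + 1 + t' * ρ + dl = Dl + 1 + t' * ρ := by omega
      rw [e, Nat.add_mul_mod_self_right]
    · -- case 4: pmin = Dl + 1 + ρ - dl, tmax = Q - 2 - q
      have hsub : (Q - 2 - q) * ρ = Q * ρ - 2 * ρ - q * ρ := by
        rw [Nat.sub_mul, Nat.sub_mul]
      have hmot : q * ρ + 2 * ρ ≤ Q * ρ := by
        have := Nat.mul_le_mul_right ρ (show q + 2 ≤ Q by omega)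
        rw [add_mul] at this
        omega
      refine cover_exists ρ _ (Dl + 1 + ρ - dl) (Q - 2 - q) _ j dl Dl hρ (by omega)
        (by omega) (by omega) (by omega) (by omega) ?_
      intro t'
      have e : Dl + 1 + ρ - dl + t' * ρ + dl = Dl + 1 + (t' + 1) * ρ := by
        rw [add_mul, one_mul]; omega
      rw [e, Nat.add_mul_mod_self_right]

/-- `u = v^{[d_ℓ;q;d_r]}` (with `|u| ≥ 3ρ`) covers position `j` of
`W = v^{[D_ℓ;Q;D_r]}` (with `per W = ρ = |v|`, `Q ≥ 2`) if and only if one of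
the four mutually exclusive conditions of the claim holds. -/
theorem stmt15 (v : List α) (ρ : ℕ) (hv : v.length = ρ) (hρ : 1 ≤ ρ)
    (Dl Dr dl dr Q q : ℕ)
    (hDl : Dl < ρ) (hDr : Dr < ρ) (hdl : dl < ρ) (hdr : dr < ρ)
    (hQ : 2 ≤ Q) (hq : 1 ≤ q)
    (W u : List α) (hW : W = rep v Dl Q Dr) (hu : u = rep v dl q dr)
    (hperW : per W = ρ) (hulen : 3 * ρ ≤ u.length)
    (j : ℕ) (hj1 : 1 ≤ j) (hjW : j ≤ W.length) :
    (∃ p : ℕ, OccursAt u W p ∧ p ≤ j ∧ j ≤ p + u.length - 1) ↔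
      ((dl ≤ Dl ∧ dr ≤ Dr ∧ q ≤ Q ∧
          Dl - dl + 1 ≤ j ∧ j ≤ Dl + Q * ρ + dr) ∨
       (Dl < dl ∧ dr ≤ Dr ∧ q ≤ Q - 1 ∧
          Dl + 1 + ρ - dl ≤ j ∧ j ≤ Dl + Q * ρ + dr) ∨
       (dl ≤ Dl ∧ Dr < dr ∧ q ≤ Q - 1 ∧
          Dl - dl + 1 ≤ j ∧ j ≤ Dl + (Q - 1) * ρ + dr) ∨
       (Dl < dl ∧ Dr < dr ∧ q ≤ Q - 2 ∧
          Dl + 1 + ρ - dl ≤ j ∧ j ≤ Dl + (Q - 1) * ρ + dr)) := by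
  have hWlen : W.length = Dl + Q * ρ + Dr := by
    rw [hW, rep_length v Dl Q Dr (by omega) (by omega), hv]
  have hulen' : u.length = dl + q * ρ + dr := by
    rw [hu, rep_length v dl q dr (by omega) (by omega), hv]
  have key := occ_iff v ρ hv hρ Dl Dr dl dr Q q hDl hDr hdl hdr W u hW hu hperW hulen
  rw [hWlen] at hjW
  have hL3 : 3 * ρ ≤ dl + q * ρ + dr := hulen' ▸ hulen
  simp only [key, hulen']
  exact arith_iff ρ Dl Dr dl dr Q q j hρ hDl hDr hdl hdr hQ hq hL3 hj1 hjW
end
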